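/- arXiv:2505.11395 — 4 statements merged into one kernel-verified Lean document; each statement's English description precedes it below -/
import Mathlib

section
/- Let f : A³ → A be a conservative minority operation, let θ be a congruence of (A;f), and let a ∈ A. Then the relation θ_a := {(x,y) ∈ A² : x = y, or x ∈ [a]_θ and y ∈ [a]_θ} is a block congruence of (A;f). -/
/-- `f` is a Maltsev operation. -/
def IsMaltsevOp {α : Type*} (f : α → α → α → α) : Prop :=
  ∀ x y : α, f x x y = y ∧ f y x x = y

/-- `f` is a minority operation. -/
def IsMinorityOp {α : Type*} (f : α → α → α → α) : Prop :=
  ∀ x y : α, f x x y = y ∧ f x y x = y ∧ f y x x = y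

/-- `f` is conservative. -/
def IsConservativeOp {α : Type*} (f : α → α → α → α) : Prop :=
  ∀ x y z : α, f x y z = x ∨ f x y z = y ∨ f x y z = z

/-- `f` preserves the binary relation `θ`. -/
def PreservesRel {α : Type*} (f : α → α → α → α) (θ : α → α → Prop) : Prop :=
  ∀ a₁ b₁ a₂ b₂ a₃ b₃ : α, θ a₁ b₁ → θ a₂ b₂ → θ a₃ b₃ →
    θ (f a₁ a₂ a₃) (f b₁ b₂ b₃)

/-- A congruence of the algebra `(α; f)`. -/
def IsCong {α : Type*} (f : α → α → α → α) (θ : α → α → Prop) : Prop :=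
  Equivalence θ ∧ PreservesRel f θ

/-- A block congruence: a congruence with at most one nontrivial class. -/
def IsBlockCong {α : Type*} (f : α → α → α → α) (θ : α → α → Prop) : Prop :=
  IsCong f θ ∧ ∀ a b c d : α, θ a b → a ≠ b → θ c d → c ≠ d → θ a c

/-- A relation is nontrivial if it relates two distinct elements. -/
def NontrivialRel {α : Type*} (θ : α → α → Prop) : Prop :=
  ∃ a b, θ a b ∧ a ≠ b

/-- Containment of binary relations. -/
def RelLE {α : Type*} (θ₁ θ₂ : α → α → Prop) : Prop :=
  ∀ x y, θ₁ x y → θ₂ x y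

/-- An atomic congruence: a nontrivial congruence such that every nontrivial
congruence contained in it equals it. -/
def IsAtomicCong {α : Type*} (f : α → α → α → α) (θ : α → α → Prop) : Prop :=
  IsCong f θ ∧ NontrivialRel θ ∧
    ∀ θ' : α → α → Prop, IsCong f θ' → NontrivialRel θ' → RelLE θ' θ →
      ∀ x y, θ' x y ↔ θ x y

/-- `(α; f)` is subdirectly irreducible: it has exactly one atomic congruence. -/
def IsSubdirectlyIrred {α : Type*} (f : α → α → α → α) : Prop :=
  ∃ θ : α → α → Prop, IsAtomicCong f θ ∧
    ∀ θ' : α → α → Prop, IsAtomicCong f θ' → ∀ x y, θ' x y ↔ θ x y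

/-!
`θ_a` is an equivalence relation, so it suffices to check that it is preserved by each
unary polynomial `z ↦ f(p,q,z)`, `z ↦ f(p,z,q)`, `z ↦ f(z,p,q)` separately. Take `s θ_a t`
with `s ≠ t`, so `s, t ∈ [a]_θ`, and let `g` be such a polynomial. If `p θ q`, the minority law
gives `g z θ z`, so `g s, g t ∈ [a]_θ`. Otherwise, if one of `g s`, `g t` leaves `[a]_θ` then so
does the other, and by conservativity both lie in `{p, q}`; being `θ`-related, they coincide.
-/

section BlockRel

variable {α : Type*}

/-- The relation `θ_a`: equality, together with `θ` on the `θ`-class of `a`. -/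
def blockRel (θ : α → α → Prop) (a : α) (x y : α) : Prop :=
  x = y ∨ (θ a x ∧ θ a y)

theorem blockRel_equivalence (θ : α → α → Prop) (a : α) : Equivalence (blockRel θ a) where
  refl _ := Or.inl rfl
  symm := by
    rintro x y (rfl | ⟨hx, hy⟩)
    exacts [Or.inl rfl, Or.inr ⟨hy, hx⟩]
  trans := by
    rintro x y z (rfl | ⟨hx, hy⟩) hyz
    · exact hyz
    · rcases hyz with rfl | ⟨-, hz⟩
      exacts [Or.inr ⟨hx, hy⟩, Or.inr ⟨hx, hz⟩]

theorem blockRel_block {θ : α → α → Prop} {a x y z w : α} (hxy : blockRel θ a x y)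
    (hne : x ≠ y) (hzw : blockRel θ a z w) (hne' : z ≠ w) : blockRel θ a x z :=
  Or.inr ⟨hxy.resolve_left hne |>.1, hzw.resolve_left hne' |>.1⟩

theorem eq_of_rel_of_mem_pair {θ : α → α → Prop} {p q x y : α} (hθ : ∀ ⦃x y⦄, θ x y → θ y x)
    (hpq : ¬θ p q) (hx : x = p ∨ x = q) (hy : y = p ∨ y = q) (hxy : θ x y) : x = y := by
  rcases hx with rfl | rfl <;> rcases hy with rfl | rfl
  exacts [rfl, absurd hxy hpq, absurd (hθ hxy) hpq, rfl]

theorem blockRel_map {θ : α → α → Prop} (hθ : Equivalence θ) {g : α → α} {p q a s t : α}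
    (hcons : ∀ z, g z = p ∨ g z = q ∨ g z = z) (hmin : θ p q → ∀ z, θ (g z) z)
    (hpres : ∀ s t, θ s t → θ (g s) (g t)) (hst : blockRel θ a s t) :
    blockRel θ a (g s) (g t) := by
  rcases hst with rfl | ⟨hs, ht⟩
  · exact Or.inl rfl
  have hgst : θ (g s) (g t) := hpres s t (hθ.trans (hθ.symm hs) ht)
  by_cases hgs : θ a (g s)
  · exact Or.inr ⟨hgs, hθ.trans hgs hgst⟩
  by_cases hgt : θ a (g t)
  · exact Or.inr ⟨hθ.trans hgt (hθ.symm hgst), hgt⟩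
  have hpq : ¬θ p q := fun h => hgs (hθ.trans hs (hθ.symm (hmin h s)))
  have hs' : g s = p ∨ g s = q := (hcons s).imp_right (·.resolve_right fun h => hgs (by rwa [h]))
  have ht' : g t = p ∨ g t = q := (hcons t).imp_right (·.resolve_right fun h => hgt (by rwa [h]))
  exact Or.inl (eq_of_rel_of_mem_pair (θ := θ) (fun _ _ => hθ.symm) hpq hs' ht' hgst)

theorem PreservesRel.of_forall_coord {f : α → α → α → α} {R : α → α → Prop}
    (hR : ∀ ⦃x y z⦄, R x y → R y z → R x z)
    (h₁ : ∀ x₁ y₁ x₂ x₃, R x₁ y₁ → R (f x₁ x₂ x₃) (f y₁ x₂ x₃))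
    (h₂ : ∀ x₁ x₂ y₂ x₃, R x₂ y₂ → R (f x₁ x₂ x₃) (f x₁ y₂ x₃))
    (h₃ : ∀ x₁ x₂ x₃ y₃, R x₃ y₃ → R (f x₁ x₂ x₃) (f x₁ x₂ y₃)) :
    PreservesRel f R :=
  fun _ _ _ _ _ _ r₁ r₂ r₃ => hR (h₁ _ _ _ _ r₁) (hR (h₂ _ _ _ _ r₂) (h₃ _ _ _ _ r₃))

theorem IsCong.rel_of_isMinorityOp {f : α → α → α → α} {θ : α → α → Prop}
    (hθ : IsCong f θ) (hmin : IsMinorityOp f) ⦃p q : α⦄ (hpq : θ p q) (z : α) :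
    θ (f p q z) z ∧ θ (f p z q) z ∧ θ (f z p q) z := by
  obtain ⟨heq, hpres⟩ := hθ
  refine ⟨?_, ?_, ?_⟩
  · simpa only [(hmin p z).1] using hpres _ _ _ _ _ _ (heq.refl p) (heq.symm hpq) (heq.refl z)
  · simpa only [(hmin p z).2.1] using hpres _ _ _ _ _ _ (heq.refl p) (heq.refl z) (heq.symm hpq)
  · simpa only [(hmin q z).2.2] using hpres _ _ _ _ _ _ (heq.refl z) hpq (heq.refl q)

theorem preservesRel_blockRel {f : α → α → α → α} (hcons : IsConservativeOp f)
    (hmin : IsMinorityOp f) {θ : α → α → Prop} (hθ : IsCong f θ) (a : α) :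
    PreservesRel f (blockRel θ a) := by
  have hmod := hθ.rel_of_isMinorityOp hmin
  obtain ⟨heq, hpres⟩ := hθ
  refine PreservesRel.of_forall_coord (fun _ _ _ => (blockRel_equivalence θ a).trans) ?_ ?_ ?_
  · intro _ _ p q
    exact blockRel_map heq (fun z => (hcons z p q).rotate)
      (fun hpq z => (hmod hpq z).2.2)
      (fun _ _ h => hpres _ _ _ _ _ _ h (heq.refl p) (heq.refl q))
  · intro p _ _ q
    exact blockRel_map heq (fun z => (hcons p z q).imp_right Or.symm)
      (fun hpq z => (hmod hpq z).2.1)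
      (fun _ _ h => hpres _ _ _ _ _ _ (heq.refl p) h (heq.refl q))
  · intro p q _ _
    exact blockRel_map heq (fun z => hcons p q z)
      (fun hpq z => (hmod hpq z).1)
      (fun _ _ h => hpres _ _ _ _ _ _ (heq.refl p) (heq.refl q) h)

end BlockRel

/-- Corollary: for a congruence `θ` of `(α; f)` and `a ∈ α`, the relation
`θ_a` keeping only the `θ`-class of `a` is a block congruence of `(α; f)`. -/
theorem stmt_4 {α : Type*} (f : α → α → α → α)
    (hcons : IsConservativeOp f) (hmin : IsMinorityOp f)
    (θ : α → α → Prop) (hθ : IsCong f θ) (a : α) :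
    IsBlockCong f (fun x y => x = y ∨ (θ a x ∧ θ a y)) :=
  ⟨⟨blockRel_equivalence θ a, preservesRel_blockRel hcons hmin hθ a⟩,
    fun _ _ _ _ => blockRel_block⟩
end

section
/- Let A be a finite set and f : A³ → A a conservative minority operation. A congruence θ of (A;f) is atomic if and only if θ is a nontrivial block congruence whose nontrivial block B is simple, i.e., the only equivalence relations on B preserved by f are the equality relation on B and the full relation B × B. -/
/-- An equivalence relation on the subset `B` preserved by `f`, i.e. a
congruence of the subalgebra `(B; f)`. -/
def IsCongOn {α : Type*} (f : α → α → α → α) (B : Set α)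
    (θ : α → α → Prop) : Prop :=
  (∀ x y, θ x y → x ∈ B ∧ y ∈ B) ∧ (∀ x ∈ B, θ x x) ∧
    (∀ x y, θ x y → θ y x) ∧ (∀ x y z, θ x y → θ y z → θ x z) ∧
    PreservesRel f θ

/-! A congruence `ψ` of a single `θ`-class `B` extends, by the identity elsewhere, to a congruence
of the whole algebra. It suffices to move one coordinate at a time within `B`: when two of the
arguments of `f` share a class, the minority laws give the class of the value, and conservativity
then pins down the value itself. Applied to the restriction of an atomic `θ` to one of its
classes, this shows that `θ` has only one nontrivial block; applied to a nontrivial congruence of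
that block, that the block is simple. Conversely, a nontrivial congruence below a block
congruence restricts to a nontrivial, hence full, congruence of its simple block. -/

section

variable {α : Type*} {f : α → α → α → α} {θ ψ : α → α → Prop}

theorem IsConservativeOp.swap (hcons : IsConservativeOp f) :
    IsConservativeOp (fun x y z => f y x z) := fun x y z => by
  rcases hcons y x z with h | h | h <;> simp only [h, true_or, or_true]

theorem IsConservativeOp.rotate (hcons : IsConservativeOp f) :
    IsConservativeOp (fun x y z => f y z x) := fun x y z => by
  rcases hcons y z x with h | h | h <;> simp only [h, true_or, or_true]

theorem IsMinorityOp.swap (hmin : IsMinorityOp f) : IsMinorityOp (fun x y z => f y x z) :=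
  fun x y => ⟨(hmin x y).1, (hmin x y).2.2, (hmin x y).2.1⟩

theorem IsMinorityOp.rotate (hmin : IsMinorityOp f) : IsMinorityOp (fun x y z => f y z x) :=
  fun x y => ⟨(hmin x y).2.1, (hmin x y).2.2, (hmin x y).1⟩

theorem PreservesRel.swap (h : PreservesRel f θ) : PreservesRel (fun x y z => f y x z) θ :=
  fun _ _ _ _ _ _ h₁ h₂ h₃ => h _ _ _ _ _ _ h₂ h₁ h₃

theorem PreservesRel.rotate (h : PreservesRel f θ) : PreservesRel (fun x y z => f y z x) θ :=
  fun _ _ _ _ _ _ h₁ h₂ h₃ => h _ _ _ _ _ _ h₂ h₃ h₁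

theorem IsCong.swap (h : IsCong f θ) : IsCong (fun x y z => f y x z) θ := ⟨h.1, h.2.swap⟩

theorem IsCong.rotate (h : IsCong f θ) : IsCong (fun x y z => f y z x) θ := ⟨h.1, h.2.rotate⟩

theorem IsCongOn.swap {B : Set α} (h : IsCongOn f B ψ) : IsCongOn (fun x y z => f y x z) B ψ :=
  ⟨h.1, h.2.1, h.2.2.1, h.2.2.2.1, h.2.2.2.2.swap⟩

theorem IsCongOn.rotate {B : Set α} (h : IsCongOn f B ψ) :
    IsCongOn (fun x y z => f y z x) B ψ :=
  ⟨h.1, h.2.1, h.2.2.1, h.2.2.2.1, h.2.2.2.2.rotate⟩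

theorem PreservesRel.of_translations (htrans : ∀ {x y z}, θ x y → θ y z → θ x z)
    (h₁ : ∀ p q s t, θ p q → θ (f p s t) (f q s t))
    (h₂ : ∀ p q s t, θ p q → θ (f s p t) (f s q t))
    (h₃ : ∀ p q s t, θ p q → θ (f s t p) (f s t q)) : PreservesRel f θ :=
  fun a₁ b₁ a₂ b₂ a₃ b₃ e₁ e₂ e₃ =>
    htrans (htrans (h₁ a₁ b₁ a₂ a₃ e₁) (h₂ a₂ b₂ b₁ a₃ e₂)) (h₃ a₃ b₃ b₁ b₂ e₃)

theorem IsCong.isCongOn_restrict (hcons : IsConservativeOp f) (hθ : IsCong f θ) (B : Set α) :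
    IsCongOn f B (fun x y => θ x y ∧ x ∈ B ∧ y ∈ B) := by
  have mem : ∀ x y z, x ∈ B → y ∈ B → z ∈ B → f x y z ∈ B := fun x y z hx hy hz => by
    rcases hcons x y z with h | h | h <;> rw [h] <;> assumption
  refine ⟨fun x y h => h.2, fun x hx => ⟨hθ.1.refl x, hx, hx⟩,
    fun x y h => ⟨hθ.1.symm h.1, h.2.2, h.2.1⟩,
    fun x y z h h' => ⟨hθ.1.trans h.1 h'.1, h.2.1, h'.2.2⟩,
    fun a₁ b₁ a₂ b₂ a₃ b₃ e₁ e₂ e₃ => ⟨hθ.2 a₁ b₁ a₂ b₂ a₃ b₃ e₁.1 e₂.1 e₃.1,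
      mem _ _ _ e₁.2.1 e₂.2.1 e₃.2.1, mem _ _ _ e₁.2.2 e₂.2.2 e₃.2.2⟩⟩

theorem IsCongOn.eq_or_rel_apply_left (hcons : IsConservativeOp f) (hmin : IsMinorityOp f)
    (hθ : IsCong f θ) {a : α} (hψ : IsCongOn f {x | θ a x} ψ) {p q : α} (hpq : ψ p q)
    (s t : α) : f p s t = f q s t ∨ ψ (f p s t) (f q s t) := by
  obtain ⟨⟨hrefl, hsymm, htrans⟩, hf⟩ := hθ
  obtain ⟨hp, hq⟩ := hψ.1 p q hpq
  have hw : θ (f p s t) (f q s t) := hf p q s s t t (htrans (hsymm hp) hq) (hrefl s) (hrefl t)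
  by_cases hs : θ a s <;> by_cases ht : θ a t
  · exact Or.inr (hψ.2.2.2.2 p q s s t t hpq (hψ.2.1 s hs) (hψ.2.1 t ht))
  · have pin : ∀ x, θ a x → f x s t = t := fun x hx => by
      have := hf x x s x t t (hrefl x) (htrans (hsymm hs) hx) (hrefl t)
      rw [(hmin x t).1] at this
      rcases hcons x s t with h | h | h <;> grind
    exact Or.inl (by rw [pin p hp, pin q hq])
  · have pin : ∀ x, θ a x → f x s t = s := fun x hx => by
      have := hf x x s s t x (hrefl x) (hrefl s) (htrans (hsymm ht) hx)
      rw [(hmin x s).2.1] at this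
      rcases hcons x s t with h | h | h <;> grind
    exact Or.inl (by rw [pin p hp, pin q hq])
  · by_cases hst : θ s t
    · have pin : ∀ x, θ a x → f x s t = x := fun x hx => by
        have := hf x x s s t s (hrefl x) (hrefl s) (hsymm hst)
        rw [(hmin s x).2.2] at this
        rcases hcons x s t with h | h | h <;> grind
      exact Or.inr (by rw [pin p hp, pin q hq]; exact hpq)
    -- `p` (or `q`), `s` and `t` lie in three distinct classes, so the class of each value pins it
    · rcases hcons p s t with h | h | h <;> rcases hcons q s t with h' | h' | h' <;> grind

theorem IsCongOn.isCong_eq_or (hcons : IsConservativeOp f) (hmin : IsMinorityOp f)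
    (hθ : IsCong f θ) {a : α} (hψ : IsCongOn f {x | θ a x} ψ) :
    IsCong f (fun x y => x = y ∨ ψ x y) := by
  have htrans : ∀ {x y z}, (x = y ∨ ψ x y) → (y = z ∨ ψ y z) → (x = z ∨ ψ x z) := by
    rintro x y z (rfl | h) (rfl | h')
    exacts [Or.inl rfl, Or.inr h', Or.inr h, Or.inr (hψ.2.2.2.1 _ _ _ h h')]
  refine ⟨⟨fun x => Or.inl rfl, fun h => h.imp Eq.symm (hψ.2.2.1 _ _), htrans⟩,
    PreservesRel.of_translations htrans ?_ ?_ ?_⟩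
  · rintro p q s t (rfl | hpq)
    exacts [Or.inl rfl, hψ.eq_or_rel_apply_left hcons hmin hθ hpq s t]
  · rintro p q s t (rfl | hpq)
    exacts [Or.inl rfl, hψ.swap.eq_or_rel_apply_left hcons.swap hmin.swap hθ.swap hpq s t]
  · rintro p q s t (rfl | hpq)
    exacts [Or.inl rfl, hψ.rotate.eq_or_rel_apply_left hcons.rotate hmin.rotate hθ.rotate hpq s t]

theorem IsAtomicCong.eq_or_of_isCongOn (hcons : IsConservativeOp f) (hmin : IsMinorityOp f)
    (hθ : IsAtomicCong f θ) {a : α} (hψ : IsCongOn f {x | θ a x} ψ) (hnt : NontrivialRel ψ)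
    {x y : α} (hxy : θ x y) : x = y ∨ ψ x y := by
  refine (hθ.2.2 _ (hψ.isCong_eq_or hcons hmin hθ.1) ?_ ?_ x y).2 hxy
  · obtain ⟨u, v, huv, hne⟩ := hnt
    exact ⟨u, v, Or.inr huv, hne⟩
  · rintro u v (rfl | huv)
    · exact hθ.1.1.refl u
    · exact hθ.1.1.trans (hθ.1.1.symm (hψ.1 u v huv).1) (hψ.1 u v huv).2

end

theorem stmt_5_general {α : Type*} (f : α → α → α → α)
    (hcons : IsConservativeOp f) (hmin : IsMinorityOp f)
    (θ : α → α → Prop) :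
    IsAtomicCong f θ ↔
      (IsBlockCong f θ ∧
        ∃ a b, a ≠ b ∧ θ a b ∧
          ∀ ψ : α → α → Prop, IsCongOn f {x | θ a x} ψ →
            (∀ x y, ψ x y → x = y) ∨ (∀ x y, θ a x → θ a y → ψ x y)) := by
  constructor
  · intro hθ
    obtain ⟨a, b, hab, hne⟩ := hθ.2.1
    refine ⟨⟨hθ.1, fun c d e g hcd hcd' heg heg' => ?_⟩, a, b, hne, hab, fun ψ hψ => ?_⟩
    · have hres := hθ.1.isCongOn_restrict hcons {x | θ c x}
      rcases hθ.eq_or_of_isCongOn hcons hmin hres ⟨c, d, ⟨hcd, hθ.1.1.refl c, hcd⟩, hcd'⟩ heg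
        with rfl | h
      exacts [absurd rfl heg', h.2.1]
    · refine or_iff_not_imp_left.2 fun htriv x y hx hy => ?_
      push Not at htriv
      rcases hθ.eq_or_of_isCongOn hcons hmin hψ htriv (hθ.1.1.trans (hθ.1.1.symm hx) hy)
        with rfl | h
      exacts [hψ.2.1 x hx, h]
  · rintro ⟨⟨hθ, hblk⟩, a, b, hne, hab, hsimple⟩
    refine ⟨hθ, ⟨a, b, hab, hne⟩, fun θ' hθ' ⟨c, d, hcd, hcd'⟩ hle x y => ⟨hle x y, fun hxy => ?_⟩⟩
    obtain rfl | hxy' := eq_or_ne x y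
    · exact hθ'.1.refl x
    have mem : ∀ {u v}, θ u v → u ≠ v → θ a u ∧ θ a v := fun huv huv' =>
      have hu := hblk a b _ _ hab hne huv huv'
      ⟨hu, hθ.1.trans hu huv⟩
    rcases hsimple _ (hθ'.isCongOn_restrict hcons {x | θ a x}) with htriv | hfull
    · exact absurd (htriv c d ⟨hcd, mem (hle c d hcd) hcd'⟩) hcd'
    · exact (hfull x y (mem hxy hxy').1 (mem hxy hxy').2).1

/-- The atomic congruences of a finite conservative minority algebra are
exactly the nontrivial block congruences whose nontrivial block is simple. -/
theorem stmt_5 {α : Type*} [Fintype α] (f : α → α → α → α)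
    (hcons : IsConservativeOp f) (hmin : IsMinorityOp f)
    (θ : α → α → Prop) (hθ : IsCong f θ) :
    IsAtomicCong f θ ↔
      (IsBlockCong f θ ∧
        ∃ a b, a ≠ b ∧ θ a b ∧
          ∀ ψ : α → α → Prop, IsCongOn f {x | θ a x} ψ →
            (∀ x y, ψ x y → x = y) ∨ (∀ x y, θ a x → θ a y → ψ x y)) :=
  stmt_5_general f hcons hmin θ
end

section
/- Let n ≥ 2 and for each i ∈ {1,…,n} let A_i be a finite set with a conservative minority operation f_i. Let R ⊆ A₁ × ⋯ × Aₙ be subdirect, functional, and multisorted critical with critical tuple s. Then each (A_i; f_i) is subdirectly irreducible, and for every i and every i-approximation t ∈ R of s, the monolith of (A_i; f_i) equals the smallest congruence of (A_i; f_i) containing the pair (s_i, t_i). -/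
/-!
Fix a coordinate `i`, an `i`-approximation `t` of `s` and a nontrivial congruence `θ` of the
`i`-th factor. Enlarging `R` by letting its `i`-th coordinate move within `θ`-classes gives an
invariant relation, and it properly contains `R`: by subdirectness some tuple of `R` has its
`i`-th entry in a nontrivial `θ`-class, and by functionality changing that entry leaves `R`.
Criticality puts `s` into the enlargement, and functionality identifies the witness with `t`,
so `θ (s i) (t i)`. Hence the congruence generated by `(s i, t i)` lies below every nontrivial
congruence, and it is nontrivial because `s ∉ R`; so it is the unique atomic congruence.
-/

section Congruences

variable {α : Type*} {f : α → α → α → α} {a b : α}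

def congGen (f : α → α → α → α) (a b : α) (x y : α) : Prop :=
  ∀ ψ : α → α → Prop, IsCong f ψ → ψ a b → ψ x y

theorem isCong_congGen : IsCong f (congGen f a b) :=
  ⟨⟨fun x _ hψ _ => hψ.1.refl x,
    fun h ψ hψ hab => hψ.1.symm (h ψ hψ hab),
    fun h₁ h₂ ψ hψ hab => hψ.1.trans (h₁ ψ hψ hab) (h₂ ψ hψ hab)⟩,
   fun _ _ _ _ _ _ h₁ h₂ h₃ ψ hψ hab =>
    hψ.2 _ _ _ _ _ _ (h₁ ψ hψ hab) (h₂ ψ hψ hab) (h₃ ψ hψ hab)⟩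

theorem congGen_le {ψ : α → α → Prop} (hψ : IsCong f ψ) (hab : ψ a b) :
    RelLE (congGen f a b) ψ :=
  fun _ _ h => h ψ hψ hab

theorem nontrivialRel_congGen (hab : a ≠ b) : NontrivialRel (congGen f a b) :=
  ⟨a, b, fun _ _ h => h, hab⟩

theorem isAtomicCong_congGen (hab : a ≠ b)
    (hbelow : ∀ θ, IsCong f θ → NontrivialRel θ → θ a b) : IsAtomicCong f (congGen f a b) :=
  ⟨isCong_congGen, nontrivialRel_congGen hab,
    fun θ hθ hθnt hle x y => ⟨hle x y, fun hxy => hxy θ hθ (hbelow θ hθ hθnt)⟩⟩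

theorem IsAtomicCong.iff_congGen {μ : α → α → Prop} (hμ : IsAtomicCong f μ) (hab : a ≠ b)
    (hbelow : ∀ θ, IsCong f θ → NontrivialRel θ → θ a b) (x y : α) :
    μ x y ↔ congGen f a b x y :=
  (hμ.2.2 _ isCong_congGen (nontrivialRel_congGen hab)
    (congGen_le hμ.1 (hbelow μ hμ.1 hμ.2.1)) x y).symm

theorem isSubdirectlyIrred_of_forall_rel (hab : a ≠ b)
    (hbelow : ∀ θ, IsCong f θ → NontrivialRel θ → θ a b) : IsSubdirectlyIrred f :=
  ⟨congGen f a b, isAtomicCong_congGen hab hbelow,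
    fun _ hθ => hθ.iff_congGen hab hbelow⟩

end Congruences

section Critical

variable {ι : Type*} {A : ι → Type*} {f : ∀ i, A i → A i → A i → A i} {R : Set (∀ i, A i)}

def IsInvariantRel (f : ∀ i, A i → A i → A i → A i) (S : Set (∀ i, A i)) : Prop :=
  ∀ t₁ t₂ t₃, t₁ ∈ S → t₂ ∈ S → t₃ ∈ S → (fun i => f i (t₁ i) (t₂ i) (t₃ i)) ∈ S

def IsFunctionalRel (R : Set (∀ i, A i)) : Prop :=
  ∀ t ∈ R, ∀ t' ∈ R, ∀ i, (∀ j, j ≠ i → t j = t' j) → t = t'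

def expandAt (R : Set (∀ i, A i)) (i : ι) (θ : A i → A i → Prop) : Set (∀ j, A j) :=
  {u | ∃ r ∈ R, (∀ j, j ≠ i → u j = r j) ∧ θ (u i) (r i)}

variable {i : ι} {θ : A i → A i → Prop}

theorem subset_expandAt (hθ : ∀ x, θ x x) : R ⊆ expandAt R i θ :=
  fun r hr => ⟨r, hr, fun _ _ => rfl, hθ _⟩

theorem IsInvariantRel.expandAt (hR : IsInvariantRel f R) (hθ : PreservesRel (f i) θ) :
    IsInvariantRel f (expandAt R i θ) := by
  rintro u₁ u₂ u₃ ⟨r₁, hr₁, hu₁, hθ₁⟩ ⟨r₂, hr₂, hu₂, hθ₂⟩ ⟨r₃, hr₃, hu₃, hθ₃⟩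
  exact ⟨fun j => f j (r₁ j) (r₂ j) (r₃ j), hR _ _ _ hr₁ hr₂ hr₃,
    fun j hj => by simp only [hu₁ j hj, hu₂ j hj, hu₃ j hj], hθ _ _ _ _ _ _ hθ₁ hθ₂ hθ₃⟩

theorem ssubset_expandAt [DecidableEq ι] (hθ : ∀ x, θ x x) (hθnt : NontrivialRel θ)
    (hsub : ∀ a : A i, ∃ t ∈ R, t i = a) (hfun : IsFunctionalRel R) :
    R ⊂ expandAt R i θ := by
  obtain ⟨a, b, hab, hne⟩ := hθnt
  obtain ⟨r, hr, hri⟩ := hsub b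
  have hmoved : Function.update r i a ∈ expandAt R i θ :=
    ⟨r, hr, fun j hj => Function.update_of_ne hj _ _, by rwa [Function.update_self, hri]⟩
  have hnotR : Function.update r i a ∉ R := fun hmem => hne <| by
    rw [← hri, ← Function.update_self i a r,
      hfun _ hmem r hr i fun j hj => Function.update_of_ne hj _ _]
  exact Set.ssubset_iff_subset_ne.mpr ⟨subset_expandAt hθ, fun h => hnotR (h ▸ hmoved)⟩

variable {s t : ∀ i, A i}

theorem apply_ne_of_approx [DecidableEq ι] (hs : s ∉ R) (ht : t ∈ R)
    (hts : ∀ j, j ≠ i → t j = s j) : s i ≠ t i := by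
  intro h
  have hts_eq : t = s := funext fun j => by
    by_cases hj : j = i
    · subst hj; exact h.symm
    · exact hts j hj
  exact hs (hts_eq ▸ ht)

theorem rel_apply_of_critical [DecidableEq ι] (hR : IsInvariantRel f R)
    (hsub : ∀ a : A i, ∃ t ∈ R, t i = a) (hfun : IsFunctionalRel R)
    (hmax : ∀ S, IsInvariantRel f S → R ⊂ S → s ∈ S) (ht : t ∈ R)
    (hts : ∀ j, j ≠ i → t j = s j) (hθ : IsCong (f i) θ) (hθnt : NontrivialRel θ) :
    θ (s i) (t i) := by
  obtain ⟨r, hr, hrs, hθr⟩ :=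
    hmax _ (hR.expandAt hθ.2) (ssubset_expandAt hθ.1.refl hθnt hsub hfun)
  rwa [hfun r hr t ht i fun j hj => by rw [← hrs j hj, hts j hj]] at hθr

end Critical

theorem stmt_12_general (n : ℕ) (A : Fin n → Type*)
    (f : ∀ i, A i → A i → A i → A i)
    (R : Set (∀ i, A i))
    (hinv : ∀ t₁ t₂ t₃, t₁ ∈ R → t₂ ∈ R → t₃ ∈ R →
        (fun i => f i (t₁ i) (t₂ i) (t₃ i)) ∈ R)
    (hsub : ∀ (i : Fin n) (a : A i), ∃ t ∈ R, t i = a)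
    (hfun : ∀ t ∈ R, ∀ t' ∈ R, ∀ i : Fin n,
        (∀ j, j ≠ i → t j = t' j) → t = t')
    (s : ∀ i, A i) (hs : s ∉ R)
    (hmax : ∀ S : Set (∀ i, A i),
        (∀ t₁ t₂ t₃, t₁ ∈ S → t₂ ∈ S → t₃ ∈ S →
          (fun i => f i (t₁ i) (t₂ i) (t₃ i)) ∈ S) →
        R ⊂ S → s ∈ S)
    (happ : ∀ i : Fin n, ∃ t ∈ R, ∀ j, j ≠ i → t j = s j) :
    ∀ i : Fin n,
      IsSubdirectlyIrred (f i) ∧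
      ∀ t ∈ R, (∀ j, j ≠ i → t j = s j) →
        ∀ μ : A i → A i → Prop, IsAtomicCong (f i) μ →
          ∀ x y, μ x y ↔
            ∀ ψ : A i → A i → Prop, IsCong (f i) ψ → ψ (s i) (t i) → ψ x y := by
  intro i
  have hbelow : ∀ t ∈ R, (∀ j, j ≠ i → t j = s j) →
      ∀ θ, IsCong (f i) θ → NontrivialRel θ → θ (s i) (t i) :=
    fun t ht hts θ hθ hθnt => rel_apply_of_critical hinv (hsub i) hfun hmax ht hts hθ hθnt
  obtain ⟨t₀, ht₀, ht₀s⟩ := happ i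
  exact ⟨isSubdirectlyIrred_of_forall_rel (apply_ne_of_approx hs ht₀ ht₀s) (hbelow t₀ ht₀ ht₀s),
    fun t ht hts μ hμ => hμ.iff_congGen (apply_ne_of_approx hs ht hts) (hbelow t ht hts)⟩

/-- For a subdirect functional multisorted critical relation `R` with critical
tuple `s` over conservative minority algebras, every factor is subdirectly
irreducible and its monolith is the congruence generated by `(s i, t i)` for
any `i`-approximation `t` of `s`. -/
theorem stmt_12 (n : ℕ) (hn : 2 ≤ n) (A : Fin n → Type*)
    [∀ i, Fintype (A i)] (f : ∀ i, A i → A i → A i → A i)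
    (hcons : ∀ i, IsConservativeOp (f i)) (hmin : ∀ i, IsMinorityOp (f i))
    (R : Set (∀ i, A i))
    (hinv : ∀ t₁ t₂ t₃, t₁ ∈ R → t₂ ∈ R → t₃ ∈ R →
        (fun i => f i (t₁ i) (t₂ i) (t₃ i)) ∈ R)
    (hsub : ∀ (i : Fin n) (a : A i), ∃ t ∈ R, t i = a)
    (hfun : ∀ t ∈ R, ∀ t' ∈ R, ∀ i : Fin n,
        (∀ j, j ≠ i → t j = t' j) → t = t')
    (s : ∀ i, A i) (hs : s ∉ R)
    (hmax : ∀ S : Set (∀ i, A i),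
        (∀ t₁ t₂ t₃, t₁ ∈ S → t₂ ∈ S → t₃ ∈ S →
          (fun i => f i (t₁ i) (t₂ i) (t₃ i)) ∈ S) →
        R ⊂ S → s ∈ S)
    (happ : ∀ i : Fin n, ∃ t ∈ R, ∀ j, j ≠ i → t j = s j) :
    ∀ i : Fin n,
      IsSubdirectlyIrred (f i) ∧
      ∀ t ∈ R, (∀ j, j ≠ i → t j = s j) →
        ∀ μ : A i → A i → Prop, IsAtomicCong (f i) μ →
          ∀ x y, μ x y ↔
            ∀ ψ : A i → A i → Prop, IsCong (f i) ψ → ψ (s i) (t i) → ψ x y :=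
  stmt_12_general n A f R hinv hsub hfun s hs hmax happ
end

section
/- Let A be a finite set with a conservative minority operation f, let n ≥ 3, let A₁,…,Aₙ ⊆ A be subsets such that each subalgebra (A_i;f) is subdirectly irreducible with monolith μ_i and nontrivial monolith block B_i, and let R ⊆ A₁ × ⋯ × Aₙ be a subdirect, functional, multisorted critical relation. Then: (1) |B_i| = 2 for every i; (2) there are bijections ℓ_i : B_i → {0,1} such that R ∩ (B₁ × ⋯ × Bₙ) = {(c₁,…,cₙ) ∈ B₁ × ⋯ × Bₙ : ℓ₁(c₁) + ⋯ + ℓₙ(cₙ) ≡ 1 (mod 2)}; (3) R is the disjoint union of R ∩ (B₁ × ⋯ × Bₙ) and R ∩ ((A₁\B₁) × ⋯ × (Aₙ\Bₙ)); (4) for all distinct i, j, the projection of R ∩ ((A₁\B₁) × ⋯ × (Aₙ\Bₙ)) onto coordinates (i,j) is the graph of a bijection between A_i\B_i and A_j\B_j; and (5) for all i, j there is a bijection g : A_i → A_j with g(f(x,y,z)) = f(g(x),g(y),g(z)) for all x,y,z ∈ A_i, i.e., (A_i;f) and (A_j;f) are isomorphic. -/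
/-- An atomic congruence of the subalgebra `(B; f)`. -/
def IsAtomicCongOn {α : Type*} (f : α → α → α → α) (B : Set α)
    (θ : α → α → Prop) : Prop :=
  IsCongOn f B θ ∧ NontrivialRel θ ∧
    ∀ θ' : α → α → Prop, IsCongOn f B θ' → NontrivialRel θ' → RelLE θ' θ →
      ∀ x y, θ' x y ↔ θ x y

/-- The subalgebra `(B; f)` is subdirectly irreducible. -/
def IsSIOn {α : Type*} (f : α → α → α → α) (B : Set α) : Prop :=
  ∃ μ : α → α → Prop, IsAtomicCongOn f B μ ∧
    ∀ μ' : α → α → Prop, IsAtomicCongOn f B μ' → ∀ x y, μ' x y ↔ μ x y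

/-- `f` preserves the `n`-ary relation `R`. -/
def PreservesSet {α : Type*} (f : α → α → α → α) {n : ℕ}
    (R : Set (Fin n → α)) : Prop :=
  ∀ t₁ t₂ t₃, t₁ ∈ R → t₂ ∈ R → t₃ ∈ R →
    (fun i => f (t₁ i) (t₂ i) (t₃ i)) ∈ R

section

variable {α : Type*} {f : α → α → α → α}

theorem IsConservativeOp.apply_mem (hcons : IsConservativeOp f) {A : Set α} {x y z : α}
    (hx : x ∈ A) (hy : y ∈ A) (hz : z ∈ A) : f x y z ∈ A := by
  rcases hcons x y z with h | h | h <;> rw [h] <;> assumption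

theorem IsMinorityOp.isMaltsevOp (hmin : IsMinorityOp f) : IsMaltsevOp f :=
  fun x y => ⟨(hmin x y).1, (hmin x y).2.2⟩

theorem exists_ne_ne_of_three_le {n : ℕ} (hn : 3 ≤ n) (i : Fin n) :
    ∃ j k : Fin n, i ≠ j ∧ i ≠ k ∧ j ≠ k := by
  have : 1 < (Finset.univ.erase i).card := by
    rw [Finset.card_erase_of_mem (Finset.mem_univ i), Finset.card_univ, Fintype.card_fin]
    omega
  obtain ⟨j, hj, k, hk, hjk⟩ := Finset.one_lt_card.1 this
  exact ⟨j, k, (Finset.ne_of_mem_erase hj).symm, (Finset.ne_of_mem_erase hk).symm, hjk⟩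

theorem bijOn_ite_pair [DecidableEq α] {a b : α} (hab : a ≠ b) :
    Set.BijOn (fun x => if x = b then (1 : ZMod 2) else 0) {a, b} Set.univ := by
  refine ⟨Set.mapsTo_univ _ _, ?_, fun z _ => ?_⟩
  · rintro x (rfl | rfl) y (rfl | rfl) h <;> simp_all
  · fin_cases z
    exacts [⟨a, by simp, by simp [hab]; rfl⟩, ⟨b, by simp, by simp; rfl⟩]

namespace IsCongOn

variable {A : Set α} {θ δ : α → α → Prop}

theorem mem_left (h : IsCongOn f A θ) {x y : α} (hxy : θ x y) : x ∈ A := (h.1 x y hxy).1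

theorem mem_right (h : IsCongOn f A θ) {x y : α} (hxy : θ x y) : y ∈ A := (h.1 x y hxy).2

theorem refl (h : IsCongOn f A θ) {x : α} (hx : x ∈ A) : θ x x := h.2.1 x hx

theorem symm (h : IsCongOn f A θ) {x y : α} (hxy : θ x y) : θ y x := h.2.2.1 x y hxy

theorem trans (h : IsCongOn f A θ) {x y z : α} (hxy : θ x y) (hyz : θ y z) : θ x z :=
  h.2.2.2.1 x y z hxy hyz

theorem map (h : IsCongOn f A θ) {a₁ b₁ a₂ b₂ a₃ b₃ : α} (h₁ : θ a₁ b₁) (h₂ : θ a₂ b₂)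
    (h₃ : θ a₃ b₃) : θ (f a₁ a₂ a₃) (f b₁ b₂ b₃) :=
  h.2.2.2.2 _ _ _ _ _ _ h₁ h₂ h₃

theorem inf (hθ : IsCongOn f A θ) (hδ : IsCongOn f A δ) :
    IsCongOn f A fun x y => θ x y ∧ δ x y :=
  ⟨fun _ _ h => hθ.1 _ _ h.1, fun _ hx => ⟨hθ.refl hx, hδ.refl hx⟩,
    fun _ _ h => ⟨hθ.symm h.1, hδ.symm h.2⟩,
    fun _ _ _ h h' => ⟨hθ.trans h.1 h'.1, hδ.trans h.2 h'.2⟩,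
    fun _ _ _ _ _ _ h₁ h₂ h₃ => ⟨hθ.map h₁.1 h₂.1 h₃.1, hδ.map h₁.2 h₂.2 h₃.2⟩⟩

theorem apply_rel_of_rel (hmin : IsMinorityOp f) (h : IsCongOn f A θ) {x y z : α}
    (hxy : θ x y) (hz : z ∈ A) :
    θ (f x y z) z ∧ θ (f x z y) z ∧ θ (f z x y) z := by
  have hy := h.mem_right hxy
  refine ⟨?_, ?_, ?_⟩
  · simpa only [(hmin y z).1] using h.map hxy (h.refl hy) (h.refl hz)
  · simpa only [(hmin y z).2.1] using h.map hxy (h.refl hz) (h.refl hy)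
  · simpa only [(hmin y z).2.2] using h.map (h.refl hz) hxy (h.refl hy)

theorem apply_eq_of_forall_rel_eq (hmin : IsMinorityOp f) (h : IsCongOn f A θ) {x : α}
    (hx : x ∈ A) (hxθ : ∀ y, θ x y → y = x) {b b' : α} (hbb' : θ b b') :
    f x b b' = x ∧ f b x b' = x ∧ f b b' x = x := by
  obtain ⟨h₁, h₂, h₃⟩ := h.apply_rel_of_rel hmin hbb' hx
  exact ⟨hxθ _ (h.symm h₃), hxθ _ (h.symm h₂), hxθ _ (h.symm h₁)⟩

theorem diag_sup_class (hcons : IsConservativeOp f) (hmin : IsMinorityOp f)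
    (hθ : IsCongOn f A θ) (c : α) :
    IsCongOn f A fun x y => (x = y ∧ x ∈ A) ∨ (θ c x ∧ θ c y) := by
  refine ⟨?_, fun x hx => Or.inl ⟨rfl, hx⟩, ?_, ?_, ?_⟩
  · rintro x y (⟨rfl, hx⟩ | ⟨hx, hy⟩)
    exacts [⟨hx, hx⟩, ⟨hθ.mem_right hx, hθ.mem_right hy⟩]
  · rintro x y (⟨rfl, hx⟩ | ⟨hx, hy⟩)
    exacts [Or.inl ⟨rfl, hx⟩, Or.inr ⟨hy, hx⟩]
  · rintro x y z (⟨rfl, -⟩ | ⟨hx, hy⟩) hyz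
    · exact hyz
    · rcases hyz with ⟨rfl, -⟩ | ⟨-, hz⟩
      exacts [Or.inr ⟨hx, hy⟩, Or.inr ⟨hx, hz⟩]
  · intro a₁ b₁ a₂ b₂ a₃ b₃ h₁ h₂ h₃
    have hle : ∀ x y, ((x = y ∧ x ∈ A) ∨ (θ c x ∧ θ c y)) → θ x y := by
      rintro x y (⟨rfl, hx⟩ | ⟨hx, hy⟩)
      exacts [hθ.refl hx, hθ.trans (hθ.symm hx) hy]
    have hA₁ := hθ.mem_left (hle _ _ h₁)
    have hA₂ := hθ.mem_left (hle _ _ h₂)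
    have hA₃ := hθ.mem_left (hle _ _ h₃)
    have := hθ.map (hle _ _ h₁) (hle _ _ h₂) (hle _ _ h₃)
    have := hcons.apply_mem hA₁ hA₂ hA₃
    have := hcons a₁ a₂ a₃
    have := hcons b₁ b₂ b₃
    have := hθ.apply_rel_of_rel hmin (x := a₁) (y := a₂) (z := a₃)
    have := hθ.apply_rel_of_rel hmin (x := a₁) (y := a₃) (z := a₂)
    have := hθ.apply_rel_of_rel hmin (x := a₂) (y := a₃) (z := a₁)
    have := @hθ.trans
    have := @hθ.symm
    -- If neither value lies in the class of `c`, they are the arguments at positions `p ≠ q`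
    -- where `a` and `b` agree; as `a_p θ a_q`, minority gives `f a θ a_r` at the third
    -- position `r`, which forces `a_r = b_r` and so `a = b`.
    grind

theorem inf_diag_sup_compl (hcons : IsConservativeOp f) {B : Set α} (hθ : IsCongOn f A θ)
    (hθB : ∀ x y, θ x y → (x ∈ B ↔ y ∈ B))
    (hB : ∀ x ∈ A, x ∉ B → ∀ b ∈ B, ∀ b' ∈ B, f x b b' = x ∧ f b x b' = x ∧ f b b' x = x) :
    IsCongOn f A fun x y => θ x y ∧ (x = y ∨ x ∉ B) := by
  refine ⟨fun x y h => hθ.1 x y h.1, fun x hx => ⟨hθ.refl hx, Or.inl rfl⟩, ?_, ?_, ?_⟩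
  · rintro x y ⟨hxy, rfl | hx⟩
    exacts [⟨hxy, Or.inl rfl⟩, ⟨hθ.symm hxy, Or.inr fun hy => hx ((hθB x y hxy).2 hy)⟩]
  · rintro x y z ⟨hxy, rfl | hx⟩ ⟨hyz, hyz'⟩
    exacts [⟨hyz, hyz'⟩, ⟨hθ.trans hxy hyz, Or.inr hx⟩]
  · rintro a₁ b₁ a₂ b₂ a₃ b₃ ⟨h₁, e₁⟩ ⟨h₂, e₂⟩ ⟨h₃, e₃⟩
    refine ⟨hθ.map h₁ h₂ h₃, ?_⟩
    have hA₁ := hθ.mem_left h₁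
    have hA₂ := hθ.mem_left h₂
    have hA₃ := hθ.mem_left h₃
    have := hθB _ _ h₁
    have := hθB _ _ h₂
    have := hθB _ _ h₃
    have := hθB _ _ (hθ.map h₁ h₂ h₃)
    have := hcons a₁ a₂ a₃
    have := hcons b₁ b₂ b₃
    have := fun h h' h'' => (hB a₁ hA₁ h a₂ h' a₃ h'').1
    have := fun h h' h'' => (hB a₂ hA₂ h a₁ h' a₃ h'').2.1
    have := fun h h' h'' => (hB a₃ hA₃ h a₁ h' a₂ h'').2.2
    -- Values in `B` are arguments at positions where `a` and `b` agree; two such positions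
    -- force the third argument to be the value by `hB`, and one position gives equal values.
    grind

end IsCongOn

theorem IsAtomicCongOn.le_of_forall_rel {A : Set α} {μ δ : α → α → Prop}
    (hμ : IsAtomicCongOn f A μ) {p q : α} (hpq : p ≠ q)
    (hrel : ∀ δ, IsCongOn f A δ → NontrivialRel δ → δ p q)
    (hδ : IsCongOn f A δ) (hnt : NontrivialRel δ) : RelLE μ δ := by
  have hδμ := hδ.inf hμ.1
  have hntδμ : NontrivialRel fun x y => δ x y ∧ μ x y :=
    ⟨p, q, ⟨hrel δ hδ hnt, hrel μ hμ.1 hμ.2.1⟩, hpq⟩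
  exact fun x y hxy => ((hμ.2.2 _ hδμ hntδμ (fun _ _ h => h.2) x y).2 hxy).1

variable {n : ℕ}

theorem map₃_update (f : α → α → α → α) (t₁ t₂ t₃ : Fin n → α) (i : Fin n) (c₁ c₂ c₃ : α) :
    (fun l => f (Function.update t₁ i c₁ l) (Function.update t₂ i c₂ l)
      (Function.update t₃ i c₃ l)) =
      Function.update (fun l => f (t₁ l) (t₂ l) (t₃ l)) i (f c₁ c₂ c₃) := by
  ext l
  by_cases hl : l = i
  · subst hl; simp
  · simp [Function.update_of_ne hl]

/-- For `K = {j}ᶜ` this relates the values at `j` of tuples of `S` in a common fibre; for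
`K = {i}` it links the `j`-th coordinates of tuples of `S` through their `i`-th coordinate. -/
def linkRel (S : Set (Fin n → α)) (K : Set (Fin n)) (j : Fin n) (x y : α) : Prop :=
  ∃ t ∈ S, ∃ t' ∈ S, (∀ l ∈ K, t l = t' l) ∧ t j = x ∧ t' j = y

theorem isCongOn_linkRel (hf : IsMaltsevOp f) {S : Set (Fin n → α)} (hS : PreservesSet f S)
    (K : Set (Fin n)) {j : Fin n} {A : Set α} (hdom : ∀ t ∈ S, t j ∈ A)
    (hsurj : ∀ x ∈ A, ∃ t ∈ S, t j = x) : IsCongOn f A (linkRel S K j) := by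
  refine ⟨?_, ?_, ?_, ?_, ?_⟩
  · rintro _ _ ⟨t, ht, t', ht', -, rfl, rfl⟩
    exact ⟨hdom t ht, hdom t' ht'⟩
  · intro x hx
    obtain ⟨t, ht, rfl⟩ := hsurj x hx
    exact ⟨t, ht, t, ht, fun _ _ => rfl, rfl, rfl⟩
  · rintro _ _ ⟨t, ht, t', ht', hK, rfl, rfl⟩
    exact ⟨t', ht', t, ht, fun l hl => (hK l hl).symm, rfl, rfl⟩
  · rintro _ _ _ ⟨t, ht, t', ht', hK, rfl, rfl⟩ ⟨u, hu, u', hu', hK', hu'', rfl⟩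
    refine ⟨_, hS t t' u ht ht' hu, u', hu', fun l hl => ?_, ?_, rfl⟩
    · simp only [hK l hl, (hf _ _).1, hK' l hl]
    · simp only [hu'', (hf _ _).2]
  · rintro _ _ _ _ _ _ ⟨t₁, ht₁, t₁', ht₁', hK₁, rfl, rfl⟩ ⟨t₂, ht₂, t₂', ht₂', hK₂, rfl, rfl⟩
      ⟨t₃, ht₃, t₃', ht₃', hK₃, rfl, rfl⟩
    exact ⟨_, hS _ _ _ ht₁ ht₂ ht₃, _, hS _ _ _ ht₁' ht₂' ht₃',
      fun l hl => by simp only [hK₁ l hl, hK₂ l hl, hK₃ l hl], rfl, rfl⟩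

def invClosure (f : α → α → α → α) (X : Set (Fin n → α)) : Set (Fin n → α) :=
  {t | ∀ T, PreservesSet f T → X ⊆ T → t ∈ T}

theorem subset_invClosure (X : Set (Fin n → α)) : X ⊆ invClosure f X :=
  fun _ ht _ _ hX => hX ht

theorem preservesSet_invClosure (X : Set (Fin n → α)) : PreservesSet f (invClosure f X) :=
  fun _ _ _ h₁ h₂ h₃ T hT hX => hT _ _ _ (h₁ T hT hX) (h₂ T hT hX) (h₃ T hT hX)

theorem invClosure_subset {X T : Set (Fin n → α)} (hT : PreservesSet f T) (hX : X ⊆ T) :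
    invClosure f X ⊆ T :=
  fun _ ht => ht T hT hX

def nbhdAt (R : Set (Fin n → α)) (i : Fin n) (δ : α → α → Prop) : Set (Fin n → α) :=
  {t | ∃ c, δ (t i) c ∧ Function.update t i c ∈ R}

theorem preservesSet_nbhdAt {R : Set (Fin n → α)} (hR : PreservesSet f R) (i : Fin n)
    {δ : α → α → Prop} (hδ : PreservesRel f δ) : PreservesSet f (nbhdAt R i δ) := by
  rintro t₁ t₂ t₃ ⟨c₁, h₁, hR₁⟩ ⟨c₂, h₂, hR₂⟩ ⟨c₃, h₃, hR₃⟩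
  refine ⟨f c₁ c₂ c₃, hδ _ _ _ _ _ _ h₁ h₂ h₃, ?_⟩
  rw [← map₃_update]
  exact hR _ _ _ hR₁ hR₂ hR₃

structure IsSubdirectFunctionalCritical (f : α → α → α → α) (A : Fin n → Set α)
    (R : Set (Fin n → α)) (s : Fin n → α) : Prop where
  mem : ∀ t ∈ R, ∀ i, t i ∈ A i
  preserves : PreservesSet f R
  subdirect : ∀ i, ∀ a ∈ A i, ∃ t ∈ R, t i = a
  functional : ∀ t ∈ R, ∀ t' ∈ R, ∀ i, (∀ j, j ≠ i → t j = t' j) → t = t'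
  notMem : s ∉ R
  maximal : ∀ S : Set (Fin n → α), (∀ t ∈ S, ∀ i, t i ∈ A i) → PreservesSet f S → R ⊂ S → s ∈ S
  exists_near : ∀ i, ∃ t ∈ R, ∀ j, j ≠ i → t j = s j

namespace IsSubdirectFunctionalCritical

open Function

variable {A : Fin n → Set α} {R : Set (Fin n → α)} {s : Fin n → α}
  (hR : IsSubdirectFunctionalCritical f A R s)
include hR

theorem eq_of_update_mem {t : Fin n → α} {i : Fin n} {c c' : α} (h : update t i c ∈ R)
    (h' : update t i c' ∈ R) : c = c' := by
  have := hR.functional _ h _ h' i fun j hj => by simp [update_of_ne hj]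
  simpa using congrFun this i

theorem exists_update_mem (i : Fin n) : ∃ c, update s i c ∈ R := by
  obtain ⟨t, ht, hts⟩ := hR.exists_near i
  refine ⟨t i, ?_⟩
  convert ht using 1
  ext j
  by_cases hj : j = i
  · subst hj; simp
  · simp [update_of_ne hj, hts j hj]

noncomputable def partner (i : Fin n) : α :=
  (hR.exists_update_mem i).choose

theorem update_partner_mem (i : Fin n) : update s i (hR.partner i) ∈ R :=
  (hR.exists_update_mem i).choose_spec

theorem partner_ne (i : Fin n) : hR.partner i ≠ s i :=
  fun h => hR.notMem (by simpa [h] using hR.update_partner_mem i)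

def block (i : Fin n) : Set α :=
  {s i, hR.partner i}

theorem rel_partner {i : Fin n} {δ : α → α → Prop} (hδ : IsCongOn f (A i) δ)
    (hnt : NontrivialRel δ) : δ (s i) (hR.partner i) := by
  have hsub : R ⊆ nbhdAt R i δ := fun t ht => ⟨t i, hδ.refl (hR.mem t ht i), by simpa using ht⟩
  have hssub : R ⊂ nbhdAt R i δ := by
    obtain ⟨c, d, hcd, hne⟩ := hnt
    obtain ⟨t, ht, rfl⟩ := hR.subdirect i _ (hδ.mem_left hcd)
    refine (Set.ssubset_iff_of_subset hsub).2
      ⟨update t i d, ⟨t i, by simpa using hδ.symm hcd, by simpa using ht⟩, fun hd => hne ?_⟩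
    exact hR.eq_of_update_mem (t := t) (by simpa using ht) hd
  have hdom : ∀ t ∈ nbhdAt R i δ, ∀ l, t l ∈ A l := by
    rintro t ⟨c, hc, htR⟩ l
    by_cases hl : l = i
    · subst hl; exact hδ.mem_left hc
    · simpa [update_of_ne hl] using hR.mem _ htR l
  obtain ⟨c, hc, hcR⟩ :=
    hR.maximal _ hdom (preservesSet_nbhdAt hR.preserves i hδ.2.2.2.2) hssub
  rwa [hR.eq_of_update_mem hcR (hR.update_partner_mem i)] at hc

theorem le_of_isCongOn {i : Fin n} {μ δ : α → α → Prop} (hμ : IsAtomicCongOn f (A i) μ)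
    (hδ : IsCongOn f (A i) δ) (hnt : NontrivialRel δ) : RelLE μ δ :=
  hμ.le_of_forall_rel (hR.partner_ne i).symm (fun _ => hR.rel_partner) hδ hnt

theorem invClosure_subset_nbhdAt {i : Fin n} {δ : α → α → Prop} (hδ : IsCongOn f (A i) δ)
    (hnt : NontrivialRel δ) : invClosure f (insert s R) ⊆ nbhdAt R i δ := by
  refine invClosure_subset (preservesSet_nbhdAt hR.preserves i hδ.2.2.2.2)
    (Set.insert_subset ⟨_, hR.rel_partner hδ hnt, hR.update_partner_mem i⟩ ?_)
  exact fun t ht => ⟨t i, hδ.refl (hR.mem t ht i), by simpa using ht⟩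

noncomputable def cubePt (F : Finset (Fin n)) : Fin n → α :=
  fun m => if m ∈ F then hR.partner m else s m

theorem cubePt_singleton (i : Fin n) : hR.cubePt {i} = update s i (hR.partner i) := by
  ext m
  by_cases hm : m = i
  · subst hm; simp [cubePt]
  · simp [cubePt, hm]

/-- Crosswise on the blocks, so that `s[j ↦ aⱼ]` and `s[i ↦ aᵢ]` realise it as a projection
of `R`; the last branch is junk, reached only outside `A i`. -/
noncomputable def transfer (i j : Fin n) (x : α) : α :=
  open Classical in
  if x = s i then hR.partner j else if x = hR.partner i then s j
  else if h : ∃ t ∈ R, t i = x then h.choose j else x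

theorem exists_mem_transfer {i j : Fin n} (hij : i ≠ j) {x : α} (hx : x ∈ A i) :
    ∃ t ∈ R, t i = x ∧ t j = hR.transfer i j x := by
  by_cases hs : x = s i
  · subst hs
    exact ⟨_, hR.update_partner_mem j, by simp [hij], by simp [transfer]⟩
  by_cases hp : x = hR.partner i
  · subst hp
    exact ⟨_, hR.update_partner_mem i, by simp, by simp [transfer, hR.partner_ne i, hij.symm]⟩
  have h : ∃ t ∈ R, t i = x := hR.subdirect i x hx
  exact ⟨h.choose, h.choose_spec.1, h.choose_spec.2, by simp [transfer, hs, hp, h]⟩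

section Minority

variable (hmin : IsMinorityOp f)
include hmin

theorem update_mem_invClosure {i : Fin n} {μ : α → α → Prop} (hμ : IsAtomicCongOn f (A i) μ)
    {u : Fin n → α} (hu : u ∈ invClosure f (insert s R)) {x : α} (hx : μ x (u i)) :
    update u i x ∈ invClosure f (insert s R) := by
  set S := invClosure f (insert s R)
  have hRS : R ⊆ S := (Set.subset_insert s R).trans (subset_invClosure _)
  have hθ : IsCongOn f (A i) (linkRel S {i}ᶜ i) := by
    refine isCongOn_linkRel hmin.isMaltsevOp (preservesSet_invClosure _) _ ?_ ?_
    · intro t ht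
      obtain ⟨c, hc, -⟩ := hR.invClosure_subset_nbhdAt hμ.1 hμ.2.1 ht
      exact hμ.1.mem_left hc
    · intro x hx
      obtain ⟨t, ht, rfl⟩ := hR.subdirect i x hx
      exact ⟨t, hRS ht, rfl⟩
  have hnt : NontrivialRel (linkRel S {i}ᶜ i) :=
    ⟨s i, hR.partner i, ⟨s, subset_invClosure _ (Set.mem_insert s R), _,
      hRS (hR.update_partner_mem i), fun l hl => by simp [update_of_ne hl], rfl, by simp⟩,
      (hR.partner_ne i).symm⟩
  obtain ⟨t, ht, t', ht', hagree, rfl, hut⟩ := hR.le_of_isCongOn hμ hθ hnt _ _ hx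
  convert preservesSet_invClosure _ t t' u ht ht' hu using 1
  ext l
  by_cases hl : l = i
  · subst hl; simp [hut, (hmin _ _).2.2]
  · simp [update_of_ne hl, hagree l hl, (hmin _ _).1]

/-- Combining the first two tuples with `s[k ↦ aₖ]` gives `s[i ↦ z][k ↦ f sₖ c₂ aₖ]`, so
`c₃ = f sₖ c₂ aₖ`. If `z ∉ {sᵢ, aᵢ}` then `c₃ ∉ {sₖ, aₖ}`, hence `c₃ = c₂`, and combining the
three given tuples gives `s`. -/
theorem eq_or_eq_of_update_mem (hcons : IsConservativeOp f) {i j k : Fin n} (hij : i ≠ j)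
    (hik : i ≠ k) (hjk : j ≠ k) {z c₁ c₂ c₃ : α} (h₁ : update (update s i z) j c₁ ∈ R)
    (h₂ : update (update s j c₁) k c₂ ∈ R) (h₃ : update (update s i z) k c₃ ∈ R) :
    z = s i ∨ z = hR.partner i := by
  by_contra! ⟨hzs, hzp⟩
  have e₄ : (fun l => f (update (update s i z) j c₁ l) (update (update s j c₁) k c₂ l)
      (update s k (hR.partner k) l)) = update (update s i z) k (f (s k) c₂ (hR.partner k)) := by
    ext l
    simp only [update_apply]
    split_ifs <;> simp_all [IsMinorityOp]
  have e₅ : (fun l => f (update (update s i z) j c₁ l) (update (update s j c₁) k c₂ l)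
      (update (update s i z) k c₃ l)) = update s k (f (s k) c₂ c₃) := by
    ext l
    simp only [update_apply]
    split_ifs <;> simp_all [IsMinorityOp]
  have h₄ := e₄ ▸ hR.preserves _ _ _ h₁ h₂ (hR.update_partner_mem k)
  have h₅ := e₅ ▸ hR.preserves _ _ _ h₁ h₂ h₃
  have hc₃ : f (s k) c₂ (hR.partner k) = c₃ := hR.eq_of_update_mem h₄ h₃
  have hc₃p : c₃ ≠ hR.partner k := by
    rintro rfl
    rw [update_comm hik] at h₃
    refine hzs (hR.eq_of_update_mem h₃ ?_)
    rw [update_eq_self_iff.2 (update_of_ne hik _ _).symm]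
    exact hR.update_partner_mem k
  have hc₃s : c₃ ≠ s k := by
    rintro rfl
    rw [update_eq_self_iff.2 (update_of_ne hik.symm _ _).symm] at h₃
    exact hzp (hR.eq_of_update_mem h₃ (hR.update_partner_mem i))
  have hc₂₃ : c₂ = c₃ := by
    rcases hcons (s k) c₂ (hR.partner k) with h | h | h <;> rw [hc₃] at h
    exacts [absurd h hc₃s, h.symm, absurd h hc₃p]
  rw [hc₂₃, (hmin _ _).2.2, update_eq_self] at h₅
  exact hR.notMem h₅

theorem cubePt_mem_of_odd {F : Finset (Fin n)} (hF : Odd F.card) : hR.cubePt F ∈ R := by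
  induction hk : F.card using Nat.strong_induction_on generalizing F with
  | _ k ih =>
    by_cases hk1 : k = 1
    · obtain ⟨i, rfl⟩ := Finset.card_eq_one.1 (hk.trans hk1)
      rw [cubePt_singleton]
      exact hR.update_partner_mem i
    obtain ⟨i, hi⟩ : F.Nonempty := Finset.card_pos.1 hF.pos
    obtain ⟨j, hj, hji⟩ := Finset.exists_mem_ne (s := F) (by have := hF.pos; omega) i
    set F' := (F.erase i).erase j
    have hcard : F'.card + 2 = F.card := by
      rw [Finset.card_erase_of_mem (Finset.mem_erase.2 ⟨hji, hj⟩), Finset.card_erase_of_mem hi]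
      have := hF.pos
      omega
    have hF' : Odd F'.card := by
      rw [Nat.odd_iff] at hF ⊢
      omega
    have e : hR.cubePt F = fun m => f (hR.cubePt F' m) (hR.cubePt {i} m) (hR.cubePt {j} m) := by
      ext m
      simp only [cubePt, F', Finset.mem_erase, Finset.mem_singleton]
      split_ifs <;> simp_all [IsMinorityOp]
    rw [e]
    exact hR.preserves _ _ _ (ih _ (by omega) hF' rfl)
      (by rw [cubePt_singleton]; exact hR.update_partner_mem i)
      (by rw [cubePt_singleton]; exact hR.update_partner_mem j)

theorem cubePt_mem_iff [NeZero n] (F : Finset (Fin n)) : hR.cubePt F ∈ R ↔ Odd F.card := by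
  refine ⟨fun hF => ?_, hR.cubePt_mem_of_odd hmin⟩
  by_contra hev
  rw [Nat.not_odd_iff_even] at hev
  set F' := if (0 : Fin n) ∈ F then F.erase 0 else insert 0 F
  have hF' : Odd F'.card := by
    by_cases h0 : (0 : Fin n) ∈ F
    · simp only [F', if_pos h0, Finset.card_erase_of_mem h0]
      have := Finset.card_pos.2 ⟨0, h0⟩
      rw [Nat.odd_iff]
      rw [Nat.even_iff] at hev
      omega
    · simp only [F', if_neg h0, Finset.card_insert_of_notMem h0]
      exact hev.add_one
  have hupd : update (hR.cubePt F) 0 (hR.cubePt F' 0) = hR.cubePt F' := by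
    ext m
    by_cases hm : m = 0
    · subst hm; simp
    · by_cases h0 : (0 : Fin n) ∈ F <;> simp [cubePt, F', h0, hm]
  have := hR.eq_of_update_mem (t := hR.cubePt F) (i := 0) (by rwa [update_eq_self])
    (hupd ▸ hR.cubePt_mem_of_odd hmin hF')
  by_cases h0 : (0 : Fin n) ∈ F <;>
    simp [cubePt, F', h0, hR.partner_ne 0, (hR.partner_ne 0).symm] at this

theorem mem_iff_sum_eq_one [DecidableEq α] [NeZero n] {t : Fin n → α}
    (ht : ∀ i, t i ∈ hR.block i) :
    t ∈ R ↔ ∑ i, (if t i = hR.partner i then (1 : ZMod 2) else 0) = 1 := by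
  rw [Finset.sum_boole, ZMod.natCast_eq_one_iff_odd, ← hR.cubePt_mem_iff hmin]
  convert Iff.rfl using 2
  ext i
  obtain h | h : t i = s i ∨ t i = hR.partner i := ht i
  · simp [cubePt, h, (hR.partner_ne i).symm]
  · simp [cubePt, h]

end Minority

section Monolith

variable (hcons : IsConservativeOp f) (hmin : IsMinorityOp f) {μ : Fin n → α → α → Prop}
  (hμ : ∀ i, IsAtomicCongOn f (A i) (μ i)) (hn : 3 ≤ n)
include hcons hmin hμ hn

theorem eq_or_eq_of_rel {i : Fin n} {z : α} (hz : μ i z (s i)) :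
    z = s i ∨ z = hR.partner i := by
  obtain ⟨j, k, hij, hik, hjk⟩ := exists_ne_ne_of_three_le hn i
  have hsS : s ∈ invClosure f (insert s R) := subset_invClosure _ (Set.mem_insert s R)
  have companion := fun {t} {l} (ht : t ∈ invClosure f (insert s R)) =>
    hR.invClosure_subset_nbhdAt (i := l) (hμ l).1 (hμ l).2.1 ht
  have hz_S := hR.update_mem_invClosure hmin (hμ i) hsS hz
  obtain ⟨c₁, hc₁, h₁⟩ := companion (l := j) hz_S
  rw [update_of_ne hij.symm] at hc₁
  obtain ⟨c₂, -, h₂⟩ :=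
    companion (l := k) (hR.update_mem_invClosure hmin (hμ j) hsS ((hμ j).1.symm hc₁))
  obtain ⟨c₃, -, h₃⟩ := companion (l := k) hz_S
  exact hR.eq_or_eq_of_update_mem hmin hcons hij hik hjk h₁ h₂ h₃

theorem setOf_rel_self_eq_block (i : Fin n) : {z | μ i (s i) z} = hR.block i := by
  have hsp := hR.rel_partner (hμ i).1 (hμ i).2.1
  ext z
  refine ⟨fun hz => hR.eq_or_eq_of_rel hcons hmin hμ hn ((hμ i).1.symm hz), ?_⟩
  rintro (rfl | rfl)
  exacts [(hμ i).1.refl ((hμ i).1.mem_left hsp), hsp]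

/-- `Δ ∪ C²` for the class `C` of `x` is a nontrivial congruence, so it contains
`(sᵢ, aᵢ)`: the class of `x` is that of `sᵢ`. -/
theorem setOf_rel_eq_block {i : Fin n} {x y : α} (hxy : μ i x y) (hne : x ≠ y) :
    {z | μ i x z} = hR.block i := by
  have hδ := (hμ i).1.diag_sup_class hcons hmin x
  have hx := (hμ i).1.refl ((hμ i).1.mem_left hxy)
  rcases hR.rel_partner hδ ⟨x, y, Or.inr ⟨hx, hxy⟩, hne⟩ with ⟨h, -⟩ | ⟨hxs, -⟩
  · exact absurd h.symm (hR.partner_ne i)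
  · rw [← hR.setOf_rel_self_eq_block hcons hmin hμ hn i]
    ext z
    exact ⟨(hμ i).1.trans ((hμ i).1.symm hxs), (hμ i).1.trans hxs⟩

theorem mem_block_of_rel {i : Fin n} {x y : α} (hxy : μ i x y) (hne : x ≠ y) :
    x ∈ hR.block i := by
  rw [← hR.setOf_rel_eq_block hcons hmin hμ hn hxy hne]
  exact (hμ i).1.refl ((hμ i).1.mem_left hxy)

theorem apply_eq_of_notMem_block {i : Fin n} {x : α} (hx : x ∈ A i) (hxB : x ∉ hR.block i)
    {b b' : α} (hb : b ∈ hR.block i) (hb' : b' ∈ hR.block i) :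
    f x b b' = x ∧ f b x b' = x ∧ f b b' x = x := by
  rw [← hR.setOf_rel_self_eq_block hcons hmin hμ hn i] at hb hb'
  refine (hμ i).1.apply_eq_of_forall_rel_eq hmin hx (fun y hxy => ?_)
    ((hμ i).1.trans ((hμ i).1.symm hb) hb')
  by_contra hne
  exact hxB (hR.mem_block_of_rel hcons hmin hμ hn hxy (Ne.symm hne))

/-- Moving `tᵢ` to the other element of the block gives a tuple of the invariant closure of
`R ∪ {s}` outside `R`; its companion at `j` differs from it exactly at `j`, so `tⱼ` lies in a
nontrivial `μⱼ`-pair. -/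
theorem mem_block_of_mem_block {t : Fin n → α} (ht : t ∈ R) {i : Fin n}
    (hti : t i ∈ hR.block i) (j : Fin n) : t j ∈ hR.block j := by
  by_cases hji : j = i
  · subst hji; exact hti
  have hRS : R ⊆ invClosure f (insert s R) :=
    (Set.subset_insert s R).trans (subset_invClosure _)
  set c := f (t i) (hR.partner i) (s i)
  have hct : c ≠ t i := by
    obtain h | h : t i = s i ∨ t i = hR.partner i := hti
    · simpa only [c, h, (hmin _ _).2.1] using hR.partner_ne i
    · simpa only [c, h, (hmin _ _).1] using (hR.partner_ne i).symm
  have hS : update t i c ∈ invClosure f (insert s R) := by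
    convert preservesSet_invClosure _ t _ s (hRS ht) (hRS (hR.update_partner_mem i))
      (subset_invClosure _ (Set.mem_insert s R)) using 1
    ext l
    by_cases hl : l = i
    · subst hl; simp [c]
    · simp [update_of_ne hl, (hmin _ _).2.2]
  obtain ⟨d, hd, hdR⟩ := hR.invClosure_subset_nbhdAt (hμ j).1 (hμ j).2.1 hS
  rw [update_of_ne hji] at hd
  refine hR.mem_block_of_rel hcons hmin hμ hn hd fun htd => hct ?_
  rw [← htd, update_eq_self_iff.2 (update_of_ne hji _ _).symm] at hdR
  exact (hR.eq_of_update_mem (by simpa using ht) hdR).symm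

theorem apply_eq_of_apply_eq {t t' : Fin n → α} (ht : t ∈ R) (ht' : t' ∈ R) {i j : Fin n}
    (htj : t j ∉ hR.block j) (hi : t i = t' i) : t j = t' j := by
  have hblock : ∀ {u : Fin n → α}, u ∈ R → ∀ {i}, u i ∈ hR.block i → ∀ j, u j ∈ hR.block j :=
    hR.mem_block_of_mem_block hcons hmin hμ hn
  have hθ : IsCongOn f (A j) (linkRel R {i} j) :=
    isCongOn_linkRel hmin.isMaltsevOp hR.preserves _ (fun t ht => hR.mem t ht j) (hR.subdirect j)
  have hθB : ∀ x y, linkRel R {i} j x y → (x ∈ hR.block j ↔ y ∈ hR.block j) := by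
    rintro _ _ ⟨u, hu, u', hu', hK, rfl, rfl⟩
    have hui := hK i rfl
    exact ⟨fun h => hblock hu' (hui ▸ hblock hu h i) j, fun h => hblock hu (hui ▸ hblock hu' h i) j⟩
  have hδ := hθ.inf_diag_sup_compl hcons hθB fun x hx hxB b hb b' hb' =>
    hR.apply_eq_of_notMem_block hcons hmin hμ hn hx hxB hb hb'
  by_contra hne
  have hlink : linkRel R {i} j (t j) (t' j) :=
    ⟨t, ht, t', ht', fun l hl => (Set.mem_singleton_iff.1 hl) ▸ hi, rfl, rfl⟩
  rcases (hR.rel_partner hδ ⟨t j, t' j, ⟨hlink, Or.inr htj⟩, hne⟩).2 with h | h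
  · exact hR.partner_ne j h.symm
  · exact h (Or.inl rfl)

theorem transfer_apply {t : Fin n → α} (ht : t ∈ R) {i : Fin n} (hti : t i ∉ hR.block i)
    (j : Fin n) : hR.transfer i j (t i) = t j := by
  have hs : t i ≠ s i := fun h => hti (Or.inl h)
  have hp : t i ≠ hR.partner i := fun h => hti (Or.inr h)
  have h : ∃ u ∈ R, u i = t i := ⟨t, ht, rfl⟩
  simp only [transfer, hs, hp, h, if_false, dif_pos]
  refine (hR.apply_eq_of_apply_eq hcons hmin hμ hn ht h.choose_spec.1 (fun htj => hti ?_)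
    h.choose_spec.2.symm).symm
  exact hR.mem_block_of_mem_block hcons hmin hμ hn ht htj i

theorem transfer_mem_block_iff {i j : Fin n} (hij : i ≠ j) {x : α} (hx : x ∈ A i) :
    hR.transfer i j x ∈ hR.block j ↔ x ∈ hR.block i := by
  obtain ⟨t, ht, rfl, htj⟩ := hR.exists_mem_transfer hij hx
  rw [← htj]
  exact ⟨fun h => hR.mem_block_of_mem_block hcons hmin hμ hn ht h i,
    fun h => hR.mem_block_of_mem_block hcons hmin hμ hn ht h j⟩

theorem bijOn_transfer {i j : Fin n} (hij : i ≠ j) :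
    Set.BijOn (hR.transfer i j) (A i) (A j) := by
  refine ⟨fun x hx => ?_, fun x hx y hy hxy => ?_, fun y hy => ?_⟩
  · obtain ⟨t, ht, -, htj⟩ := hR.exists_mem_transfer hij hx
    exact htj ▸ hR.mem t ht j
  · by_cases hxB : x ∈ hR.block i
    · have hyB := (hR.transfer_mem_block_iff hcons hmin hμ hn hij hy).1
        (hxy ▸ (hR.transfer_mem_block_iff hcons hmin hμ hn hij hx).2 hxB)
      obtain rfl | rfl : x = s i ∨ x = hR.partner i := hxB <;>
      obtain rfl | rfl : y = s i ∨ y = hR.partner i := hyB <;>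
      simp_all [transfer, hR.partner_ne, (hR.partner_ne _).symm]
    · obtain ⟨t, ht, rfl, htj⟩ := hR.exists_mem_transfer hij hx
      obtain ⟨t', ht', rfl, ht'j⟩ := hR.exists_mem_transfer hij hy
      exact hR.apply_eq_of_apply_eq hcons hmin hμ hn ht ht' hxB (htj.trans (hxy.trans ht'j.symm))
  · by_cases hs : y = s j
    · exact ⟨_, (hμ i).1.mem_right (hR.rel_partner (hμ i).1 (hμ i).2.1),
        by simp [transfer, hR.partner_ne, hs]⟩
    by_cases hp : y = hR.partner j
    · exact ⟨_, (hμ i).1.mem_left (hR.rel_partner (hμ i).1 (hμ i).2.1), by simp [transfer, hp]⟩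
    obtain ⟨t, ht, rfl⟩ := hR.subdirect j y hy
    have hti : t i ∉ hR.block i := fun h =>
      (hR.mem_block_of_mem_block hcons hmin hμ hn ht h j).elim hs hp
    exact ⟨t i, hR.mem t ht i, hR.transfer_apply hcons hmin hμ hn ht hti j⟩

theorem transfer_map {i j : Fin n} (hij : i ≠ j) {x y z : α} (hx : x ∈ A i) (hy : y ∈ A i)
    (hz : z ∈ A i) :
    hR.transfer i j (f x y z) =
      f (hR.transfer i j x) (hR.transfer i j y) (hR.transfer i j z) := by
  obtain ⟨tx, htx, rfl, htxj⟩ := hR.exists_mem_transfer hij hx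
  obtain ⟨ty, hty, rfl, htyj⟩ := hR.exists_mem_transfer hij hy
  obtain ⟨tz, htz, rfl, htzj⟩ := hR.exists_mem_transfer hij hz
  have hW := hR.preserves _ _ _ htx hty htz
  rw [← htxj, ← htyj, ← htzj]
  by_cases hWi : f (tx i) (ty i) (tz i) ∈ hR.block i
  swap
  · exact hR.transfer_apply hcons hmin hμ hn hW hWi j
  have hWj := hR.mem_block_of_mem_block hcons hmin hμ hn hW hWi j
  have hgs : hR.transfer i j (s i) = hR.partner j := by simp [transfer]
  have hgp : hR.transfer i j (hR.partner i) = s j := by simp [transfer, hR.partner_ne]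
  have hBx := hR.transfer_mem_block_iff hcons hmin hμ hn hij hx
  have hBy := hR.transfer_mem_block_iff hcons hmin hμ hn hij hy
  have hBz := hR.transfer_mem_block_iff hcons hmin hμ hn hij hz
  have hout := fun {k} {u} (hu : u ∈ A k) hu' {b b'} (hb : b ∈ hR.block k)
    (hb' : b' ∈ hR.block k) => hR.apply_eq_of_notMem_block hcons hmin hμ hn hu hu' hb hb'
  have := hout hx; have := hout hy; have := hout hz
  have := hout (hR.mem tx htx j); have := hout (hR.mem ty hty j); have := hout (hR.mem tz htz j)
  have := hcons (tx i) (ty i) (tz i)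
  have := hcons (tx j) (ty j) (tz j)
  have := hR.partner_ne i
  have := hR.partner_ne j
  simp only [block, Set.mem_insert_iff, Set.mem_singleton_iff] at *
  -- Both values lie in the blocks: by conservativity and `hout` they are the images of the
  -- arguments in the block, and on the two-element blocks the minority laws decide the rest.
  grind [IsMinorityOp]

end Monolith

end IsSubdirectFunctionalCritical

end

theorem stmt_17_general {α : Type*} (f : α → α → α → α)
    (hcons : IsConservativeOp f) (hmin : IsMinorityOp f)
    (n : ℕ) (hn : 3 ≤ n) (A : Fin n → Set α)
    (μ : Fin n → α → α → Prop)
    (hμ : ∀ i, IsAtomicCongOn f (A i) (μ i))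
    (B : Fin n → Set α)
    (hB : ∀ i, ∃ x y, x ≠ y ∧ μ i x y ∧ B i = {z | μ i x z})
    (R : Set (Fin n → α))
    (hdom : ∀ t ∈ R, ∀ i, t i ∈ A i)
    (hinv : PreservesSet f R)
    (hsub : ∀ (i : Fin n), ∀ a ∈ A i, ∃ t ∈ R, t i = a)
    (hfun : ∀ t ∈ R, ∀ t' ∈ R, ∀ i : Fin n,
        (∀ j, j ≠ i → t j = t' j) → t = t')
    (s : Fin n → α) (hs : s ∉ R)
    (hmax : ∀ S : Set (Fin n → α), (∀ t ∈ S, ∀ i, t i ∈ A i) →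
        PreservesSet f S → R ⊂ S → s ∈ S)
    (happ : ∀ i : Fin n, ∃ t ∈ R, ∀ j, j ≠ i → t j = s j) :
    (∀ i : Fin n, (B i).ncard = 2) ∧
    (∃ ℓ : Fin n → α → ZMod 2,
      (∀ i, Set.BijOn (ℓ i) (B i) (Set.univ : Set (ZMod 2))) ∧
      ∀ t : Fin n → α, (∀ i, t i ∈ B i) →
        (t ∈ R ↔ (∑ i, ℓ i (t i)) = 1)) ∧
    (∀ t ∈ R, (∀ i, t i ∈ B i) ∨ (∀ i, t i ∈ A i \ B i)) ∧
    (∀ i j : Fin n, i ≠ j →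
      (∀ x ∈ A i \ B i, ∃ t ∈ R, (∀ m, t m ∈ A m \ B m) ∧ t i = x) ∧
      (∀ t ∈ R, ∀ t' ∈ R, (∀ m, t m ∈ A m \ B m) → (∀ m, t' m ∈ A m \ B m) →
        (t i = t' i ↔ t j = t' j))) ∧
    (∀ i j : Fin n, ∃ g : α → α, Set.BijOn g (A i) (A j) ∧
      ∀ x ∈ A i, ∀ y ∈ A i, ∀ z ∈ A i,
        g (f x y z) = f (g x) (g y) (g z)) := by
  classical
  have hR : IsSubdirectFunctionalCritical f A R s := ⟨hdom, hinv, hsub, hfun, hs, hmax, happ⟩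
  obtain rfl : B = hR.block := funext fun i => by
    obtain ⟨x, y, hne, hxy, hBi⟩ := hB i
    exact hBi.trans (hR.setOf_rel_eq_block hcons hmin hμ hn hxy hne)
  have : NeZero n := ⟨by omega⟩
  have hblock : ∀ {t}, t ∈ R → ∀ {i}, t i ∈ hR.block i → ∀ j, t j ∈ hR.block j :=
    hR.mem_block_of_mem_block hcons hmin hμ hn
  refine ⟨fun i => Set.ncard_pair (hR.partner_ne i).symm,
    ⟨_, fun i => bijOn_ite_pair (hR.partner_ne i).symm, fun t ht => hR.mem_iff_sum_eq_one hmin ht⟩,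
    fun t ht => ?_, fun i j hij => ⟨fun x hx => ?_, fun t ht t' ht' hto ht'o => ?_⟩, fun i j => ?_⟩
  · by_cases h : ∃ i, t i ∈ hR.block i
    · obtain ⟨i, hi⟩ := h
      exact Or.inl (hblock ht hi)
    · exact Or.inr fun i => ⟨hdom t ht i, fun hi => h ⟨i, hi⟩⟩
  · obtain ⟨t, ht, rfl⟩ := hsub i x hx.1
    exact ⟨t, ht, fun m => ⟨hdom t ht m, fun h => hx.2 (hblock ht h i)⟩, rfl⟩
  · exact ⟨hR.apply_eq_of_apply_eq hcons hmin hμ hn ht ht' (hto j).2,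
      fun h => (hR.apply_eq_of_apply_eq hcons hmin hμ hn ht' ht (ht'o i).2 h.symm).symm⟩
  · rcases eq_or_ne i j with rfl | hij
    · exact ⟨id, Set.bijOn_id _, fun _ _ _ _ _ _ => rfl⟩
    · exact ⟨hR.transfer i j, hR.bijOn_transfer hcons hmin hμ hn hij,
        fun x hx y hy z hz => hR.transfer_map hcons hmin hμ hn hij hx hy hz⟩

/-- Characterization of subdirect functional multisorted critical relations of
arity `n ≥ 3` over subdirectly irreducible subalgebras (with monoliths `μ i`
and nontrivial monolith blocks `B i`) of a finite conservative minority
algebra. -/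
theorem stmt_17 {α : Type*} [Fintype α] (f : α → α → α → α)
    (hcons : IsConservativeOp f) (hmin : IsMinorityOp f)
    (n : ℕ) (hn : 3 ≤ n) (A : Fin n → Set α)
    (μ : Fin n → α → α → Prop)
    (hμ : ∀ i, IsAtomicCongOn f (A i) (μ i))
    (hSI : ∀ i, ∀ μ' : α → α → Prop, IsAtomicCongOn f (A i) μ' →
        ∀ x y, μ' x y ↔ μ i x y)
    (B : Fin n → Set α)
    (hB : ∀ i, ∃ x y, x ≠ y ∧ μ i x y ∧ B i = {z | μ i x z})
    (R : Set (Fin n → α))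
    (hdom : ∀ t ∈ R, ∀ i, t i ∈ A i)
    (hinv : PreservesSet f R)
    (hsub : ∀ (i : Fin n), ∀ a ∈ A i, ∃ t ∈ R, t i = a)
    (hfun : ∀ t ∈ R, ∀ t' ∈ R, ∀ i : Fin n,
        (∀ j, j ≠ i → t j = t' j) → t = t')
    (s : Fin n → α) (hsdom : ∀ i, s i ∈ A i) (hs : s ∉ R)
    (hmax : ∀ S : Set (Fin n → α), (∀ t ∈ S, ∀ i, t i ∈ A i) →
        PreservesSet f S → R ⊂ S → s ∈ S)
    (happ : ∀ i : Fin n, ∃ t ∈ R, ∀ j, j ≠ i → t j = s j) :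
    (∀ i : Fin n, (B i).ncard = 2) ∧
    (∃ ℓ : Fin n → α → ZMod 2,
      (∀ i, Set.BijOn (ℓ i) (B i) (Set.univ : Set (ZMod 2))) ∧
      ∀ t : Fin n → α, (∀ i, t i ∈ B i) →
        (t ∈ R ↔ (∑ i, ℓ i (t i)) = 1)) ∧
    (∀ t ∈ R, (∀ i, t i ∈ B i) ∨ (∀ i, t i ∈ A i \ B i)) ∧
    (∀ i j : Fin n, i ≠ j →
      (∀ x ∈ A i \ B i, ∃ t ∈ R, (∀ m, t m ∈ A m \ B m) ∧ t i = x) ∧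
      (∀ t ∈ R, ∀ t' ∈ R, (∀ m, t m ∈ A m \ B m) → (∀ m, t' m ∈ A m \ B m) →
        (t i = t' i ↔ t j = t' j))) ∧
    (∀ i j : Fin n, ∃ g : α → α, Set.BijOn g (A i) (A j) ∧
      ∀ x ∈ A i, ∀ y ∈ A i, ∀ z ∈ A i,
        g (f x y z) = f (g x) (g y) (g z)) :=
  stmt_17_general f hcons hmin n hn A μ hμ B hB R hdom hinv hsub hfun s hs hmax happ
end
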